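/- Then ∫₀¹ Gφ(p) π(p) dp = 0 for every twice continuously differentiable function φ on [0,1]. -/

import Mathlib

open MeasureTheory Set Filter Topology Asymptotics

/-- The infinitesimal generator of the forward jump-diffusion process (Eq. (7) of the paper). -/
noncomputable def fwdGen (lam : ℝ) (v mu w0 : ℝ → ℝ) (phi : ℝ → ℝ) (p : ℝ) : ℝ :=
  1 / 2 * v p * deriv (deriv phi) p + mu p * deriv phi p
    + lam * w0 p * (phi 0 - phi p) + lam * (1 - w0 p) * (phi 1 - phi p)

/-- Standing assumptions on the coefficients (Assumption 2.1 of the paper). -/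
structure ModelAssumptions (lam : ℝ) (v mu w0 : ℝ → ℝ) : Prop where
  lam_nonneg : 0 ≤ lam
  analytic : ∃ U : Set ℝ, IsOpen U ∧ Icc (0 : ℝ) 1 ⊆ U ∧
    AnalyticOnNhd ℝ v U ∧ AnalyticOnNhd ℝ mu U ∧ AnalyticOnNhd ℝ w0 U
  w0_mem : ∀ p ∈ Icc (0 : ℝ) 1, w0 p ∈ Icc (0 : ℝ) 1
  mu_zero_pos : 0 < mu 0
  mu_one_neg : mu 1 < 0
  v_zero : v 0 = 0
  v_one : v 1 = 0
  v_pos : ∀ p ∈ Ioo (0 : ℝ) 1, 0 < v p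
  deriv_v_zero_pos : 0 < deriv v 0
  deriv_v_one_neg : deriv v 1 < 0

/-- `pi` is a smooth, integrable, normalized, positive solution of the stationary
boundary value problem (Eq. (14) of the paper). -/
structure StationaryDensity (lam : ℝ) (v mu w0 : ℝ → ℝ) (pi : ℝ → ℝ) : Prop where
  contDiffOn : ContDiffOn ℝ 2 pi (Ioo (0 : ℝ) 1)
  pos : ∀ p ∈ Ioo (0 : ℝ) 1, 0 < pi p
  integrableOn : IntegrableOn pi (Ioo (0 : ℝ) 1)
  total_mass : (∫ p in Ioo (0 : ℝ) 1, pi p) = 1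
  ode : ∀ p ∈ Ioo (0 : ℝ) 1,
    deriv (deriv fun q => 1 / 2 * v q * pi q) p - deriv (fun q => mu q * pi q) p
      - lam * pi p = 0
  bc_zero : Tendsto (fun p => mu p * pi p - deriv (fun q => 1 / 2 * v q * pi q) p)
    (𝓝[Ioo (0 : ℝ) 1] 0) (𝓝 (lam * ∫ p in Ioo (0 : ℝ) 1, w0 p * pi p))
  bc_one : Tendsto (fun p => mu p * pi p - deriv (fun q => 1 / 2 * v q * pi q) p)
    (𝓝[Ioo (0 : ℝ) 1] 1) (𝓝 (-(lam * ∫ p in Ioo (0 : ℝ) 1, (1 - w0 p) * pi p)))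
  vpi_zero : Tendsto (fun p => v p * pi p) (𝓝[Ioo (0 : ℝ) 1] 0) (𝓝 0)
  vpi_one : Tendsto (fun p => v p * pi p) (𝓝[Ioo (0 : ℝ) 1] 1) (𝓝 0)

/-- The drift of the diffusive motion of the time-reversed process:
`μ̃(p) = −μ(p) + (vπ)'(p)/π(p)`. -/
noncomputable def bwdDrift (v mu pi : ℝ → ℝ) (p : ℝ) : ℝ :=
  -mu p + deriv (fun q => v q * pi q) p / pi p

/-- The scale density of the backward diffusive motion:
`S̃'(p) = exp(−∫_{1/2}^p 2μ̃(z)/v(z) dz)`. -/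
noncomputable def bwdScaleDensity (v mu pi : ℝ → ℝ) (p : ℝ) : ℝ :=
  Real.exp (-∫ z in (1 / 2 : ℝ)..p, 2 * bwdDrift v mu pi z / v z)

/-- The scale function of the backward diffusive motion: `S̃(p) = ∫_{1/2}^p S̃'(x) dx`. -/
noncomputable def bwdScale (v mu pi : ℝ → ℝ) (p : ℝ) : ℝ :=
  ∫ x in (1 / 2 : ℝ)..p, bwdScaleDensity v mu pi x

/-- The speed density of the backward diffusive motion: `m̃(p) = 1/(v(p)S̃'(p))`. -/
noncomputable def bwdSpeedDensity (v mu pi : ℝ → ℝ) (p : ℝ) : ℝ :=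
  1 / (v p * bwdScaleDensity v mu pi p)

/-!
Split `Gφ = Lφ + λ (w₀ φ(0) + w₁ φ(1))` with `Lφ = ½ v φ'' + μ φ' − λ φ`.
With `A = ½ v π` and the flux `J = μπ − A'`, the stationary equation reads `J' = −λπ`,
so the Lagrange concomitant `F = φ' A + φ J` satisfies `F' = (Lφ) π`.
The boundary conditions give `F → λκ₀ φ(0)` at `0` and `F → −λκ₁ φ(1)` at `1`, hence
`∫ (Lφ) π = −λκ₁ φ(1) − λκ₀ φ(0)`, which the jump terms `λκ₀ φ(0) + λκ₁ φ(1)` cancel.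
-/

theorem integral_Ioo_eq_sub_of_hasDerivAt_of_tendsto {f f' : ℝ → ℝ} {a b fa fb : ℝ}
    (hab : a < b) (hderiv : ∀ x ∈ Ioo a b, HasDerivAt f (f' x) x)
    (hint : IntegrableOn f' (Ioo a b)) (ha : Tendsto f (𝓝[Ioo a b] a) (𝓝 fa))
    (hb : Tendsto f (𝓝[Ioo a b] b) (𝓝 fb)) :
    ∫ x in Ioo a b, f' x = fb - fa := by
  rw [nhdsWithin_Ioo_eq_nhdsGT hab] at ha
  rw [nhdsWithin_Ioo_eq_nhdsLT hab] at hb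
  rw [← integral_Ioc_eq_integral_Ioo, ← intervalIntegral.integral_of_le hab.le]
  exact intervalIntegral.integral_eq_sub_of_hasDerivAt_of_tendsto hab hderiv
    ((intervalIntegrable_iff_integrableOn_Ioo_of_le hab.le).2 hint) ha hb

noncomputable def killedGen (lam : ℝ) (v mu phi : ℝ → ℝ) (p : ℝ) : ℝ :=
  1 / 2 * v p * deriv (deriv phi) p + mu p * deriv phi p - lam * phi p

theorem fwdGen_eq_killedGen_add (lam : ℝ) (v mu w0 phi : ℝ → ℝ) (p : ℝ) :
    fwdGen lam v mu w0 phi p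
      = killedGen lam v mu phi p + lam * phi 0 * w0 p + lam * phi 1 * (1 - w0 p) := by
  simp only [fwdGen, killedGen]
  ring

noncomputable def probFlux (v mu pi : ℝ → ℝ) (p : ℝ) : ℝ :=
  mu p * pi p - deriv (fun q => 1 / 2 * v q * pi q) p

noncomputable def concomitant (v mu pi phi : ℝ → ℝ) (p : ℝ) : ℝ :=
  deriv phi p * (1 / 2 * v p * pi p) + phi p * probFlux v mu pi p

section Lagrange

variable {lam : ℝ} {v mu pi phi : ℝ → ℝ} {p : ℝ}

theorem hasDerivAt_probFlux
    (hA : DifferentiableAt ℝ (deriv fun q => 1 / 2 * v q * pi q) p)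
    (hB : DifferentiableAt ℝ (fun q => mu q * pi q) p)
    (hode : deriv (deriv fun q => 1 / 2 * v q * pi q) p - deriv (fun q => mu q * pi q) p
      - lam * pi p = 0) :
    HasDerivAt (probFlux v mu pi) (-(lam * pi p)) p :=
  (hB.hasDerivAt.sub hA.hasDerivAt).congr_deriv (by linarith)

theorem hasDerivAt_concomitant (hphi : DifferentiableAt ℝ phi p)
    (hphi' : DifferentiableAt ℝ (deriv phi) p)
    (hA : DifferentiableAt ℝ (fun q => 1 / 2 * v q * pi q) p)
    (hJ : HasDerivAt (probFlux v mu pi) (-(lam * pi p)) p) :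
    HasDerivAt (concomitant v mu pi phi) (killedGen lam v mu phi p * pi p) p := by
  refine ((hphi'.hasDerivAt.mul hA.hasDerivAt).add (hphi.hasDerivAt.mul hJ)).congr_deriv ?_
  simp only [killedGen, probFlux]
  ring

theorem tendsto_concomitant {l : Filter ℝ} {x J : ℝ} (hl : l ≤ 𝓝 x)
    (hphi : ContDiff ℝ 2 phi) (hvpi : Tendsto (fun p => v p * pi p) l (𝓝 0))
    (hJ : Tendsto (probFlux v mu pi) l (𝓝 J)) :
    Tendsto (concomitant v mu pi phi) l (𝓝 (phi x * J)) := by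
  have hA : Tendsto (fun p => 1 / 2 * v p * pi p) l (𝓝 0) := by
    simpa only [mul_assoc, mul_zero] using hvpi.const_mul (1 / 2 : ℝ)
  have hphi' := ((hphi.continuous_deriv one_le_two).tendsto x).mono_left hl
  have h := (hphi'.mul hA).add (((hphi.continuous.tendsto x).mono_left hl).mul hJ)
  rwa [mul_zero, zero_add] at h

end Lagrange

namespace ModelAssumptions

variable {lam : ℝ} {v mu w0 : ℝ → ℝ}

theorem contDiffAt (H : ModelAssumptions lam v mu w0) {n : WithTop ℕ∞} {p : ℝ}
    (hp : p ∈ Icc (0 : ℝ) 1) :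
    ContDiffAt ℝ n v p ∧ ContDiffAt ℝ n mu p ∧ ContDiffAt ℝ n w0 p := by
  obtain ⟨U, -, hU, hv, hmu, hw0⟩ := H.analytic
  exact ⟨(hv p (hU hp)).contDiffAt, (hmu p (hU hp)).contDiffAt, (hw0 p (hU hp)).contDiffAt⟩

theorem continuousOn (H : ModelAssumptions lam v mu w0) :
    ContinuousOn v (Icc 0 1) ∧ ContinuousOn mu (Icc 0 1) ∧ ContinuousOn w0 (Icc 0 1) :=
  ⟨fun _ hp => (H.contDiffAt (n := 0) hp).1.continuousAt.continuousWithinAt,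
    fun _ hp => (H.contDiffAt (n := 0) hp).2.1.continuousAt.continuousWithinAt,
    fun _ hp => (H.contDiffAt (n := 0) hp).2.2.continuousAt.continuousWithinAt⟩

theorem continuousOn_killedGen (H : ModelAssumptions lam v mu w0) {phi : ℝ → ℝ}
    (hphi : ContDiff ℝ 2 phi) : ContinuousOn (killedGen lam v mu phi) (Icc 0 1) := by
  obtain ⟨hv, hmu, -⟩ := H.continuousOn
  have hphi'' : Continuous (deriv (deriv phi)) :=
    (ContDiff.deriv' (n := 1) hphi).continuous_deriv_one
  exact ((continuousOn_const.mul hv).mul hphi''.continuousOn).add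
    (hmu.mul (hphi.continuous_deriv one_le_two).continuousOn) |>.sub
    (continuousOn_const.mul hphi.continuous.continuousOn)

end ModelAssumptions

namespace StationaryDensity

variable {lam : ℝ} {v mu w0 pi : ℝ → ℝ}

theorem integrableOn_mul (HP : StationaryDensity lam v mu w0 pi) {q : ℝ → ℝ}
    (hq : ContinuousOn q (Icc 0 1)) : IntegrableOn (fun p => q p * pi p) (Ioo 0 1) :=
  IntegrableOn.continuousOn_mul_of_subset hq HP.integrableOn isCompact_Icc measurableSet_Ioo
    Ioo_subset_Icc_self

theorem hasDerivAt_concomitant (H : ModelAssumptions lam v mu w0)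
    (HP : StationaryDensity lam v mu w0 pi) {phi : ℝ → ℝ} (hphi : ContDiff ℝ 2 phi)
    {p : ℝ} (hp : p ∈ Ioo (0 : ℝ) 1) :
    HasDerivAt (concomitant v mu pi phi) (killedGen lam v mu phi p * pi p) p := by
  have hpi : ContDiffAt ℝ 2 pi p := HP.contDiffOn.contDiffAt (isOpen_Ioo.mem_nhds hp)
  obtain ⟨hv, hmu, -⟩ := H.contDiffAt (n := 2) (Ioo_subset_Icc_self hp)
  have hA : ContDiffAt ℝ 2 (fun q => 1 / 2 * v q * pi q) p := (contDiffAt_const.mul hv).mul hpi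
  have hJ := hasDerivAt_probFlux
    ((hA.derivWithin (m := 1) (by norm_num)).differentiableAt one_ne_zero)
    ((hmu.mul hpi).differentiableAt two_ne_zero) (HP.ode p hp)
  exact _root_.hasDerivAt_concomitant (hphi.differentiable two_ne_zero p)
    (hphi.differentiable_deriv_two p) (hA.differentiableAt two_ne_zero) hJ

theorem integral_killedGen_mul (H : ModelAssumptions lam v mu w0)
    (HP : StationaryDensity lam v mu w0 pi) {phi : ℝ → ℝ} (hphi : ContDiff ℝ 2 phi) :
    ∫ p in Ioo (0 : ℝ) 1, killedGen lam v mu phi p * pi p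
      = phi 1 * -(lam * ∫ p in Ioo (0 : ℝ) 1, (1 - w0 p) * pi p)
        - phi 0 * (lam * ∫ p in Ioo (0 : ℝ) 1, w0 p * pi p) :=
  integral_Ioo_eq_sub_of_hasDerivAt_of_tendsto one_pos
    (fun _ hp => HP.hasDerivAt_concomitant H hphi hp)
    (HP.integrableOn_mul (H.continuousOn_killedGen hphi))
    (tendsto_concomitant nhdsWithin_le_nhds hphi HP.vpi_zero HP.bc_zero)
    (tendsto_concomitant nhdsWithin_le_nhds hphi HP.vpi_one HP.bc_one)

end StationaryDensity

/-- a solution of the stationary boundary value problem satisfies the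
adjoint relation `∫ Gφ·π = 0` for all C² functions `φ`. -/
theorem stmt_1 (lam : ℝ) (v mu w0 pi : ℝ → ℝ)
    (H : ModelAssumptions lam v mu w0)
    (HP : StationaryDensity lam v mu w0 pi) :
    ∀ phi : ℝ → ℝ, ContDiff ℝ 2 phi →
      (∫ p in Ioo (0 : ℝ) 1, fwdGen lam v mu w0 phi p * pi p) = 0 := by
  intro phi hphi
  have hw0 := HP.integrableOn_mul H.continuousOn.2.2
  have hw1 := HP.integrableOn_mul (q := fun p => 1 - w0 p)
    (continuousOn_const.sub H.continuousOn.2.2)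
  have hsplit : ∀ p, fwdGen lam v mu w0 phi p * pi p = killedGen lam v mu phi p * pi p
      + lam * phi 0 * (w0 p * pi p) + lam * phi 1 * ((1 - w0 p) * pi p) := fun p => by
    rw [fwdGen_eq_killedGen_add]
    ring
  have hL := HP.integrableOn_mul (H.continuousOn_killedGen hphi)
  have hLw0 : IntegrableOn (fun p => killedGen lam v mu phi p * pi p
      + lam * phi 0 * (w0 p * pi p)) (Ioo 0 1) := hL.add (hw0.const_mul _)
  simp_rw [hsplit]
  rw [integral_add hLw0 (hw1.const_mul _), integral_add hL (hw0.const_mul _),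
    integral_const_mul, integral_const_mul, HP.integral_killedGen_mul H hphi]
  ring
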